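/- arXiv:1511.04210 — 3 statements merged into one kernel-verified Lean document; each statement's English description precedes it below -/
import Mathlib

section
/- Let v, ṽ be nonzero reals with sign(v) = sign(ṽ), w, w̃ ∈ ℝ^d, x ∈ ℝ^d with sign(⟨w̃, x⟩) = sign(⟨w, x⟩). Define v^λ = λṽ + (1−λ)v and w^λ = (λ ṽ w̃ + (1−λ) v w)/v^λ for λ ∈ (0,1). Then sign(⟨w^λ, x⟩) = sign(⟨w, x⟩) and sign(v^λ) = sign(v) for all λ ∈ (0,1). -/
/-!
Both summands of `λ ṽ ⟨w̃, x⟩ + (1 - λ) v ⟨w, x⟩` have sign `sign v · sign ⟨w, x⟩`, and the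
prefactor `(v^λ)⁻¹` has sign `sign v`; since `sign v ^ 2 = 1`, the product has sign `sign ⟨w, x⟩`.
-/

open scoped RealInnerProductSpace

namespace Real

theorem sign_eq_coe_sign (r : ℝ) : Real.sign r = (SignType.sign r : ℝ) := by
  rcases lt_trichotomy r 0 with hr | rfl | hr
  · simp [sign_of_neg hr, _root_.sign_neg hr]
  · simp
  · simp [sign_of_pos hr, _root_.sign_pos hr]

theorem sign_mul (a b : ℝ) : Real.sign (a * b) = Real.sign a * Real.sign b := by
  simp only [sign_eq_coe_sign, _root_.sign_mul, SignType.coe_mul]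

theorem sign_mul_self_of_ne_zero {r : ℝ} (hr : r ≠ 0) : Real.sign r * Real.sign r = 1 := by
  rcases sign_apply_eq_of_ne_zero r hr with h | h <;> rw [h] <;> norm_num

theorem sign_mul_of_pos {c : ℝ} (hc : 0 < c) (r : ℝ) : Real.sign (c * r) = Real.sign r := by
  rw [sign_mul, sign_of_pos hc, one_mul]

theorem sign_add_of_sign_eq {a b : ℝ} (h : Real.sign a = Real.sign b) :
    Real.sign (a + b) = Real.sign a := by
  rcases lt_trichotomy a 0 with ha | ha | ha <;> rcases lt_trichotomy b 0 with hb | hb | hb <;>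
    simp only [sign_of_neg, sign_of_pos, sign_zero, add_neg, add_pos, ha, hb, add_zero, zero_add]
      at h ⊢ <;> norm_num at h

theorem sign_mul_add_mul_of_sign_eq {p q a b : ℝ} (hp : 0 < p) (hq : 0 < q)
    (h : Real.sign a = Real.sign b) : Real.sign (p * b + q * a) = Real.sign a := by
  rw [sign_add_of_sign_eq (by rw [sign_mul_of_pos hp, sign_mul_of_pos hq, h]),
    sign_mul_of_pos hp, h]

end Real

theorem stmt_7_general (d : ℕ) (v vt : ℝ) (hv : v ≠ 0)
    (hsign : Real.sign v = Real.sign vt)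
    (w wt x : EuclideanSpace ℝ (Fin d))
    (hx : Real.sign ⟪wt, x⟫ = Real.sign ⟪w, x⟫) :
    ∀ l ∈ Set.Ioo (0 : ℝ) 1,
      Real.sign ⟪(l * vt + (1 - l) * v)⁻¹ •
          ((l * vt) • wt + ((1 - l) * v) • w), x⟫ = Real.sign ⟪w, x⟫ ∧
      Real.sign (l * vt + (1 - l) * v) = Real.sign v := by
  rintro l ⟨hl0, hl1⟩
  have h1l : 0 < 1 - l := sub_pos.mpr hl1
  have hsign_path : Real.sign (l * vt + (1 - l) * v) = Real.sign v :=
    Real.sign_mul_add_mul_of_sign_eq hl0 h1l hsign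
  have hinner : ⟪(l * vt + (1 - l) * v)⁻¹ • ((l * vt) • wt + ((1 - l) * v) • w), x⟫ =
      (l * vt + (1 - l) * v)⁻¹ * (l * (vt * ⟪wt, x⟫) + (1 - l) * (v * ⟪w, x⟫)) := by
    simp only [real_inner_smul_left, inner_add_left]
    ring
  have hsign_terms : Real.sign (v * ⟪w, x⟫) = Real.sign (vt * ⟪wt, x⟫) := by
    rw [Real.sign_mul, Real.sign_mul, hsign, hx]
  refine ⟨?_, hsign_path⟩
  rw [hinner, Real.sign_mul, Real.sign_inv, hsign_path,
    Real.sign_mul_add_mul_of_sign_eq hl0 h1l hsign_terms, Real.sign_mul, ← mul_assoc,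
    Real.sign_mul_self_of_ne_zero hv, one_mul]

/-- Along the interpolation path (w^λ, v^λ), the signs of ⟨w^λ, x⟩ and of
v^λ are preserved for all λ ∈ (0,1). -/
theorem stmt_7 (d : ℕ) (v vt : ℝ) (hv : v ≠ 0) (hvt : vt ≠ 0)
    (hsign : Real.sign v = Real.sign vt)
    (w wt x : EuclideanSpace ℝ (Fin d))
    (hx : Real.sign ⟪wt, x⟫ = Real.sign ⟪w, x⟫) :
    ∀ l ∈ Set.Ioo (0 : ℝ) 1,
      Real.sign ⟪(l * vt + (1 - l) * v)⁻¹ •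
          ((l * vt) • wt + ((1 - l) * v) • w), x⟫ = Real.sign ⟪w, x⟫ ∧
      Real.sign (l * vt + (1 - l) * v) = Real.sign v :=
  stmt_7_general d v vt hv hsign w wt x hx
end

section
/- Let X be a real-valued random variable whose distribution is symmetric (X and −X have the same law), and let L : ℝ → ℝ be such that almost surely, whenever x is a realization of X, max{L(x), L(−x)} > L(0). Then P[L(X) > L(0)] ≥ 1/2. -/
/-!
Since `X` and `-X` have the same law, so do `L ∘ X` and `L ∘ (-X)`, hence the events
`L (X) > L 0` and `L (-X) > L 0` have equal probability. The hypothesis says their union is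
almost sure, so twice that probability is at least one.
-/

open MeasureTheory ProbabilityTheory

lemma measure_univ_le_two_mul_of_identDistrib {Ω α : Type*} [MeasurableSpace Ω]
    [MeasurableSpace α] {μ : Measure Ω} {X Y : Ω → α} (hXY : IdentDistrib X Y μ μ)
    {s : Set α} (hs : MeasurableSet s) (h : ∀ᵐ ω ∂μ, X ω ∈ s ∨ Y ω ∈ s) :
    μ Set.univ ≤ 2 * μ (X ⁻¹' s) := by
  have hunion : (X ⁻¹' s ∪ Y ⁻¹' s : Set Ω) =ᵐ[μ] (Set.univ : Set Ω) := by
    filter_upwards [h] with ω hω using eq_true hω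
  calc μ Set.univ = μ (X ⁻¹' s ∪ Y ⁻¹' s) := (measure_congr hunion).symm
    _ ≤ μ (X ⁻¹' s) + μ (Y ⁻¹' s) := measure_union_le _ _
    _ = 2 * μ (X ⁻¹' s) := by rw [← hXY.measure_mem_eq hs, two_mul]

/-- If X is a symmetric real random variable and L satisfies
max{L(x), L(−x)} > L(0) almost surely along realizations of X, then
P[L(X) > L(0)] ≥ 1/2. -/
theorem stmt_10 {Ω : Type*} [MeasurableSpace Ω] (μ : Measure Ω)
    [IsProbabilityMeasure μ] (X : Ω → ℝ) (hX : Measurable X)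
    (hsym : Measure.map X μ = Measure.map (fun ω => -X ω) μ)
    (L : ℝ → ℝ) (hL : Measurable L)
    (h : ∀ᵐ ω ∂μ, max (L (X ω)) (L (-X ω)) > L 0) :
    μ {ω | L (X ω) > L 0} ≥ 1 / 2 := by
  have hXsym : IdentDistrib X (fun ω => -X ω) μ μ :=
    ⟨hX.aemeasurable, hX.neg.aemeasurable, hsym⟩
  have hbound := measure_univ_le_two_mul_of_identDistrib (hXsym.comp hL) measurableSet_Ioi
    (s := Set.Ioi (L 0)) (h.mono fun ω hω => lt_max_iff.mp hω)
  rw [measure_univ, mul_comm] at hbound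
  exact ENNReal.div_le_of_le_mul hbound
end

section
/- Let a be a fixed unit vector in ℝ^d (d ≥ 2) and let b be drawn uniformly from the unit sphere S^{d−1}. Then for any δ ∈ (0, 2], P[‖a − b‖ ≤ δ] ≥ (1/(π(d−1))) · (δ √(1 − δ²/4))^{d−1}. -/
/-!
Integrate the indicator of `{(x, b) | ‖x‖ ≤ 1, c ‖x‖ ≤ ⟪b, x⟫}` against `volume ⊗ μ` in both
orders. Since both measures are rotation invariant, the fibre over `x` has measure
`μ {b | c ≤ ⟪a, b⟫}` and the fibre over `b` is the spherical sector of axis `b` and height `c`,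
so the cap probability is the volume fraction of the sector in the unit ball. In coordinates
`ℝ × ℝ^(d-1)` along the axis, the sector contains the two cones over the disc of radius
`√(1 - c²)` at height `c` with apexes `0` and the pole, of total volume `√(1 - c²)^(d-1) B / d`,
while the slices of the ball give it volume at most `(π / 2) B`, where `B` is the volume of the
unit ball of `ℝ^(d-1)`. For `c = 1 - δ² / 2` the cap lies in `{‖a - b‖ ≤ δ}` and
`√(1 - c²) = δ √(1 - δ² / 4)`.
-/

open MeasureTheory Metric Module Set Real
open scoped ENNReal RealInnerProductSpace

namespace SphericalCap

theorem setLIntegral_Ioc_ofReal {f : ℝ → ℝ} (hf : Continuous f) {a b : ℝ} (hab : a ≤ b)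
    (hf0 : ∀ t ∈ Ioc a b, 0 ≤ f t) :
    ∫⁻ t in Ioc a b, ENNReal.ofReal (f t) = ENNReal.ofReal (∫ t in a..b, f t) := by
  rw [intervalIntegral.integral_of_le hab, ofReal_integral_eq_lintegral_ofReal
    (hf.integrableOn_Icc.mono_set Ioc_subset_Icc_self)
    ((ae_restrict_iff' measurableSet_Ioc).2 (.of_forall hf0))]

theorem integral_sqrt_one_sub_sq_pow_le {n : ℕ} (hn : 1 ≤ n) :
    ∫ t in (-1 : ℝ)..1, √(1 - t ^ 2) ^ n ≤ π / 2 := by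
  rw [← integral_sqrt_one_sub_sq]
  refine intervalIntegral.integral_mono_on (by norm_num)
    ((by fun_prop : Continuous _).intervalIntegrable _ _)
    ((by fun_prop : Continuous _).intervalIntegrable _ _) fun t ht ↦ ?_
  have hle : √(1 - t ^ 2) ≤ 1 := sqrt_le_one.mpr (by nlinarith)
  simpa using pow_le_pow_of_le_one (sqrt_nonneg _) hle hn

theorem mul_sqrt_le_of_sq_le {c x t : ℝ} (hc : 0 ≤ c) (ht : 0 ≤ t) (h : c ^ 2 * x ≤ t ^ 2) :
    c * √x ≤ t := by
  rw [← sqrt_sq hc, ← sqrt_mul (sq_nonneg c)]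
  exact (sqrt_le_sqrt h).trans_eq (sqrt_sq ht)

theorem div_pow_mul_pow_succ (r c : ℝ) (n : ℕ) : (r / c) ^ n * c ^ (n + 1) = r ^ n * c := by
  rcases eq_or_ne c 0 with rfl | hc
  · simp
  · rw [div_pow, pow_succ]
    field_simp

section SolidOfRevolution

variable {F : Type*} [NormedAddCommGroup F] [MeasurableSpace F] [BorelSpace F]

def solidOfRevolution (s : Set ℝ) (f : ℝ → ℝ) : Set (ℝ × F) := {p | p.1 ∈ s ∧ ‖p.2‖ ≤ f p.1}

theorem measurableSet_solidOfRevolution {s : Set ℝ} (hs : MeasurableSet s) {f : ℝ → ℝ}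
    (hf : Measurable f) : MeasurableSet (solidOfRevolution (F := F) s f) :=
  (measurable_fst hs).inter (measurableSet_le measurable_snd.norm (hf.comp measurable_fst))

variable [NormedSpace ℝ F] [FiniteDimensional ℝ F] (ν : Measure F) [ν.IsAddHaarMeasure]

theorem prod_solidOfRevolution {s : Set ℝ} (hs : MeasurableSet s) {f : ℝ → ℝ} (hf : Measurable f)
    (hf0 : ∀ t ∈ s, 0 ≤ f t) :
    (volume.prod ν) (solidOfRevolution s f) =
      (∫⁻ t in s, ENNReal.ofReal (f t ^ finrank ℝ F)) * ν (closedBall 0 1) := by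
  have hslice : ∀ t, ν (Prod.mk t ⁻¹' solidOfRevolution s f) =
      s.indicator (fun t ↦ ENNReal.ofReal (f t ^ finrank ℝ F) * ν (closedBall 0 1)) t := by
    intro t
    by_cases ht : t ∈ s
    · rw [indicator_of_mem ht, ← Measure.addHaar_closedBall' ν 0 (hf0 t ht)]
      congr 1
      ext z
      simp [solidOfRevolution, ht]
    · rw [indicator_of_notMem ht]
      simp [solidOfRevolution, ht]
  rw [Measure.prod_apply (measurableSet_solidOfRevolution hs hf), funext hslice,
    lintegral_indicator hs, lintegral_mul_const _ (by fun_prop)]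

theorem prod_unitBall_le (hF : 1 ≤ finrank ℝ F) :
    (volume.prod ν) {p : ℝ × F | p.1 ^ 2 + ‖p.2‖ ^ 2 ≤ 1} ≤
      ENNReal.ofReal (π / 2) * ν (closedBall 0 1) := by
  have hsub : {p : ℝ × F | p.1 ^ 2 + ‖p.2‖ ^ 2 ≤ 1} ⊆
      solidOfRevolution (Icc (-1) 1) fun t ↦ √(1 - t ^ 2) := by
    rintro ⟨t, z⟩ (h : t ^ 2 + ‖z‖ ^ 2 ≤ 1)
    refine ⟨⟨by nlinarith [norm_nonneg z], by nlinarith [norm_nonneg z]⟩, ?_⟩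
    exact le_sqrt_of_sq_le (by linarith)
  refine (measure_mono hsub).trans ?_
  rw [prod_solidOfRevolution ν measurableSet_Icc (by fun_prop) fun _ _ ↦ sqrt_nonneg _,
    setLIntegral_congr Ioc_ae_eq_Icc.symm,
    setLIntegral_Ioc_ofReal (by fun_prop) (by norm_num) fun _ _ ↦ by positivity]
  gcongr
  exact integral_sqrt_one_sub_sq_pow_le hF

theorem le_prod_sector {c : ℝ} (hc0 : 0 ≤ c) (hc1 : c < 1) :
    ENNReal.ofReal (√(1 - c ^ 2) ^ finrank ℝ F / (finrank ℝ F + 1)) * ν (closedBall 0 1) ≤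
      (volume.prod ν) {p : ℝ × F | p.1 ^ 2 + ‖p.2‖ ^ 2 ≤ 1 ∧
        c * √(p.1 ^ 2 + ‖p.2‖ ^ 2) ≤ p.1} := by
  set n := finrank ℝ F
  set r := √(1 - c ^ 2)
  have hr : r ^ 2 = 1 - c ^ 2 := sq_sqrt (by nlinarith)
  have hr0 : 0 ≤ r := sqrt_nonneg _
  set lower : Set (ℝ × F) := solidOfRevolution (Ioc 0 c) fun t ↦ r / c * t
  set upper : Set (ℝ × F) := solidOfRevolution (Ioc c 1) fun t ↦ r / (1 - c) * (1 - t)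
  have hlower : lower ⊆ {p | p.1 ^ 2 + ‖p.2‖ ^ 2 ≤ 1 ∧ c * √(p.1 ^ 2 + ‖p.2‖ ^ 2) ≤ p.1} := by
    rintro ⟨t, z⟩ ⟨⟨ht0, htc⟩, hz : ‖z‖ ≤ r / c * t⟩
    have hc : 0 < c := ht0.trans_le htc
    have hz' : c * ‖z‖ ≤ r * t := by
      rwa [div_mul_eq_mul_div, le_div_iff₀ hc, mul_comm] at hz
    have hcone : c ^ 2 * (t ^ 2 + ‖z‖ ^ 2) ≤ t ^ 2 := by
      nlinarith [pow_le_pow_left₀ (by positivity) hz' 2]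
    have hball : t ^ 2 + ‖z‖ ^ 2 ≤ 1 :=
      le_of_mul_le_mul_left (by nlinarith) (pow_pos hc 2)
    exact ⟨hball, mul_sqrt_le_of_sq_le hc0 ht0.le hcone⟩
  have hupper : upper ⊆ {p | p.1 ^ 2 + ‖p.2‖ ^ 2 ≤ 1 ∧ c * √(p.1 ^ 2 + ‖p.2‖ ^ 2) ≤ p.1} := by
    rintro ⟨t, z⟩ ⟨⟨hct, ht1⟩, hz : ‖z‖ ≤ r / (1 - c) * (1 - t)⟩
    have hz' : (1 - c) * ‖z‖ ≤ r * (1 - t) := by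
      rwa [div_mul_eq_mul_div, le_div_iff₀ (by linarith), mul_comm] at hz
    have hc : 0 < 1 - c := by linarith
    have hsq : (1 - c) * ((1 - c) * ‖z‖ ^ 2) ≤ (1 - c) * ((1 + c) * (1 - t) ^ 2) := by
      nlinarith [pow_le_pow_left₀ (by positivity) hz' 2]
    have hsq' : (1 - c) * ‖z‖ ^ 2 ≤ (1 - c) * (1 - t ^ 2) := by
      nlinarith [le_of_mul_le_mul_left hsq hc, mul_nonneg (sub_nonneg.2 hct.le) (sub_nonneg.2 ht1)]
    have hball : t ^ 2 + ‖z‖ ^ 2 ≤ 1 := by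
      linarith [le_of_mul_le_mul_left hsq' hc]
    refine ⟨hball, mul_sqrt_le_of_sq_le hc0 (hc0.trans hct.le) ?_⟩
    nlinarith
  have hdisj : Disjoint lower upper :=
    disjoint_left.2 fun p hl hu ↦ (hl.1.2.trans_lt hu.1.1).false
  have hvol_lower : (volume.prod ν) lower =
      ENNReal.ofReal (r ^ n * c / (n + 1)) * ν (closedBall 0 1) := by
    have hf0 : ∀ t ∈ Ioc 0 c, 0 ≤ (r / c * t) ^ n := fun t ht ↦
      pow_nonneg (mul_nonneg (div_nonneg hr0 hc0) ht.1.le) _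
    rw [prod_solidOfRevolution ν measurableSet_Ioc (by fun_prop) fun t ht ↦ ?_,
      setLIntegral_Ioc_ofReal (by fun_prop) hc0 hf0, ← div_pow_mul_pow_succ r c n]
    · simp only [mul_pow, intervalIntegral.integral_const_mul, integral_pow]
      ring_nf
    · exact mul_nonneg (div_nonneg hr0 hc0) ht.1.le
  have hvol_upper : (volume.prod ν) upper =
      ENNReal.ofReal (r ^ n * (1 - c) / (n + 1)) * ν (closedBall 0 1) := by
    have hc : 0 ≤ 1 - c := by linarith
    have hf0 : ∀ t ∈ Ioc c 1, 0 ≤ (r / (1 - c) * (1 - t)) ^ n := fun t ht ↦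
      pow_nonneg (mul_nonneg (div_nonneg hr0 hc) (sub_nonneg.2 ht.2)) _
    rw [prod_solidOfRevolution ν measurableSet_Ioc (by fun_prop) fun t ht ↦ ?_,
      setLIntegral_Ioc_ofReal (by fun_prop) hc1.le hf0, ← div_pow_mul_pow_succ r (1 - c) n]
    · simp only [mul_pow, intervalIntegral.integral_const_mul,
        intervalIntegral.integral_comp_sub_left (fun t ↦ t ^ n), integral_pow]
      ring_nf
    · exact mul_nonneg (div_nonneg hr0 hc) (sub_nonneg.2 ht.2)
  calc ENNReal.ofReal (r ^ n / (n + 1)) * ν (closedBall 0 1)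
      = ENNReal.ofReal (r ^ n * c / (n + 1)) * ν (closedBall 0 1) +
          ENNReal.ofReal (r ^ n * (1 - c) / (n + 1)) * ν (closedBall 0 1) := by
        have hc : 0 ≤ 1 - c := by linarith
        rw [← add_mul, ← ENNReal.ofReal_add (by positivity) (by positivity)]
        ring_nf
    _ = (volume.prod ν) (lower ∪ upper) := by
        rw [measure_union hdisj (measurableSet_solidOfRevolution measurableSet_Ioc (by fun_prop)),
          hvol_lower, hvol_upper]
    _ ≤ _ := measure_mono (union_subset hlower hupper)

end SolidOfRevolution

section InnerProductSpace

variable {E : Type*} [NormedAddCommGroup E] [InnerProductSpace ℝ E] [MeasurableSpace E]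
  [BorelSpace E]

theorem measure_norm_inner_mem_eq {ν : Measure E} (hν : ∀ T : E ≃ₗᵢ[ℝ] E, ν.map T = ν)
    {x y : E} (hxy : ‖x‖ = ‖y‖) {s : Set (ℝ × ℝ)} (hs : MeasurableSet s) :
    ν {b | (‖b‖, ⟪x, b⟫) ∈ s} = ν {b | (‖b‖, ⟪y, b⟫) ∈ s} := by
  set T : E ≃ₗᵢ[ℝ] E := (ℝ ∙ (x - y))ᗮ.reflection
  have hT : T x = y := Submodule.reflection_sub hxy
  have hpre : {b | (‖b‖, ⟪x, b⟫) ∈ s} = T ⁻¹' {b | (‖b‖, ⟪y, b⟫) ∈ s} := by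
    ext b
    simp [← hT, LinearIsometryEquiv.inner_map_map]
  rw [hpre, ← Measure.map_apply T.continuous.measurable, hν]
  exact hs.preimage (by fun_prop)

def sphericalSector (u : E) (c : ℝ) : Set E := {x | ‖x‖ ≤ 1 ∧ c * ‖x‖ ≤ ⟪u, x⟫}

variable [FiniteDimensional ℝ E]

theorem measure_inner_ge_mul_volume_closedBall [Nontrivial E] (μ : Measure E)
    [IsProbabilityMeasure μ] (hμ : ∀ᵐ b ∂μ, ‖b‖ = 1) (hsymm : ∀ T : E ≃ₗᵢ[ℝ] E, μ.map T = μ) {a u : E} (ha : ‖a‖ = 1)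
    (hu : ‖u‖ = 1) (c : ℝ) :
    μ {b | c ≤ ⟪a, b⟫} * volume (closedBall (0 : E) 1) = volume (sphericalSector u c) := by
  set S : Set (E × E) := {p | p.1 ∈ sphericalSector p.2 c}
  have hS : MeasurableSet S := by
    refine IsClosed.measurableSet ?_
    exact (isClosed_le continuous_fst.norm continuous_const).inter
      (isClosed_le (continuous_const.mul continuous_fst.norm) (continuous_snd.inner continuous_fst))
  have hslice_left : ∀ x ≠ (0 : E), μ (Prod.mk x ⁻¹' S) =
      (closedBall (0 : E) 1).indicator (fun _ ↦ μ {b | c ≤ ⟪a, b⟫}) x := by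
    intro x hx
    by_cases hx1 : ‖x‖ ≤ 1
    · have hnx : 0 < ‖x‖ := norm_pos_iff.2 hx
      rw [indicator_of_mem (mem_closedBall_zero_iff.2 hx1)]
      have hslice : Prod.mk x ⁻¹' S = {b | c ≤ ⟪‖x‖⁻¹ • x, b⟫} := by
        ext b
        change ‖x‖ ≤ 1 ∧ c * ‖x‖ ≤ ⟪b, x⟫ ↔ c ≤ ⟪‖x‖⁻¹ • x, b⟫
        rw [real_inner_smul_left, real_inner_comm, le_inv_mul_iff₀ hnx, mul_comm]
        exact and_iff_right hx1
      rw [hslice]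
      exact measure_norm_inner_mem_eq hsymm (by simp [norm_smul, hnx.ne', ha])
        (s := {q | c ≤ q.2}) (measurableSet_le measurable_const measurable_snd)
    · rw [indicator_of_notMem (by simpa using hx1)]
      convert measure_empty (μ := μ)
      ext b
      simp [S, sphericalSector, hx1]
  have hslice_right : ∀ b : E, ‖b‖ = 1 →
      volume ((fun x ↦ (x, b)) ⁻¹' S) = volume (sphericalSector u c) := fun b hb ↦
    measure_norm_inner_mem_eq (fun T ↦ T.measurePreserving.map_eq) (hb.trans hu.symm)
      (s := {q | q.1 ≤ 1 ∧ c * q.1 ≤ q.2})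
      ((measurableSet_le measurable_fst measurable_const).inter
        (measurableSet_le (by fun_prop) measurable_snd))
  have hleft : (volume.prod μ) S = μ {b | c ≤ ⟪a, b⟫} * volume (closedBall (0 : E) 1) := by
    rw [Measure.prod_apply hS, lintegral_congr_ae ((volume.ae_ne 0).mono hslice_left),
      lintegral_indicator measurableSet_closedBall, setLIntegral_const]
  have hright : (volume.prod μ) S = volume (sphericalSector u c) := by
    rw [Measure.prod_apply_symm hS, lintegral_congr_ae (hμ.mono hslice_right), lintegral_const,
      measure_univ, mul_one]
  rw [← hleft, hright]

theorem exists_measurePreserving_inner_norm_sq {F : Type*} [NormedAddCommGroup F]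
    [InnerProductSpace ℝ F] [FiniteDimensional ℝ F] [MeasurableSpace F] [BorelSpace F]
    (hE : finrank ℝ E = finrank ℝ F + 1) :
    ∃ (Φ : E → ℝ × F) (u : E), MeasurePreserving Φ ∧ ‖u‖ = 1 ∧
      ∀ x, ⟪u, x⟫ = (Φ x).1 ∧ ‖x‖ ^ 2 = (Φ x).1 ^ 2 + ‖(Φ x).2‖ ^ 2 := by
  have hdim : finrank ℝ E = finrank ℝ (WithLp 2 (ℝ × F)) := by
    rw [hE, (WithLp.linearEquiv 2 ℝ (ℝ × F)).finrank_eq, finrank_prod, finrank_self, add_comm]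
  let Ψ : E ≃ₗᵢ[ℝ] WithLp 2 (ℝ × F) :=
    (stdOrthonormalBasis ℝ E).equiv (stdOrthonormalBasis ℝ _) (finCongr hdim)
  refine ⟨fun x ↦ WithLp.ofLp (Ψ x), Ψ.symm (WithLp.toLp 2 (1, 0)),
    (WithLp.volume_preserving_ofLp ℝ F).comp Ψ.measurePreserving, by simp, fun x ↦ ⟨?_, ?_⟩⟩
  · rw [← Ψ.inner_map_map, Ψ.apply_symm_apply]
    simp
  · rw [← Ψ.norm_map, WithLp.prod_norm_sq_eq_of_L2]
    simp

theorem le_measure_inner_ge {m : ℕ} (hm : 1 ≤ m) (hE : finrank ℝ E = m + 1) (μ : Measure E)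
    [IsProbabilityMeasure μ] (hμ : ∀ᵐ b ∂μ, ‖b‖ = 1) (hsymm : ∀ T : E ≃ₗᵢ[ℝ] E, μ.map T = μ)
    {a : E} (ha : ‖a‖ = 1) {c : ℝ} (hc0 : 0 ≤ c) (hc1 : c < 1) :
    ENNReal.ofReal (2 / (π * (m + 1)) * √(1 - c ^ 2) ^ m) ≤ μ {b | c ≤ ⟪a, b⟫} := by
  have hF : finrank ℝ (EuclideanSpace ℝ (Fin m)) = m := finrank_euclideanSpace_fin
  obtain ⟨Φ, u, hΦ, hu, hΦu⟩ :=
    exists_measurePreserving_inner_norm_sq (F := EuclideanSpace ℝ (Fin m)) (hF ▸ hE)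
  have : Nontrivial E := Module.nontrivial_of_finrank_eq_succ hE
  set B := volume (closedBall (0 : EuclideanSpace ℝ (Fin m)) 1)
  have hball : volume (closedBall (0 : E) 1) =
      volume {p : ℝ × EuclideanSpace ℝ (Fin m) | p.1 ^ 2 + ‖p.2‖ ^ 2 ≤ 1} := by
    rw [← hΦ.measure_preimage (measurableSet_le (by fun_prop) measurable_const).nullMeasurableSet]
    congr 1
    ext x
    simp [← (hΦu x).2, sq_le_one_iff₀ (norm_nonneg x)]
  have hsector : volume (sphericalSector u c) =
      volume {p : ℝ × EuclideanSpace ℝ (Fin m) | p.1 ^ 2 + ‖p.2‖ ^ 2 ≤ 1 ∧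
        c * √(p.1 ^ 2 + ‖p.2‖ ^ 2) ≤ p.1} := by
    have hmeas : MeasurableSet {p : ℝ × EuclideanSpace ℝ (Fin m) | p.1 ^ 2 + ‖p.2‖ ^ 2 ≤ 1 ∧
        c * √(p.1 ^ 2 + ‖p.2‖ ^ 2) ≤ p.1} :=
      measurableSet_setOfPred.2 (by fun_prop)
    rw [← hΦ.measure_preimage hmeas.nullMeasurableSet]
    congr 1
    ext x
    change ‖x‖ ≤ 1 ∧ c * ‖x‖ ≤ ⟪u, x⟫ ↔ _ ∧ _
    rw [← (hΦu x).2, ← (hΦu x).1, sqrt_sq (norm_nonneg x), sq_le_one_iff₀ (norm_nonneg x)]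
  have hB : B ≠ 0 := (measure_closedBall_pos _ _ one_pos).ne'
  have hB' : B ≠ ⊤ := measure_closedBall_lt_top.ne
  have hπ : ENNReal.ofReal (π / 2) ≠ 0 := by simp [pi_pos]
  refine (ENNReal.mul_le_mul_iff_left hπ ENNReal.ofReal_ne_top).1 <|
    (ENNReal.mul_le_mul_iff_left hB hB').1 ?_
  calc ENNReal.ofReal (2 / (π * (m + 1)) * √(1 - c ^ 2) ^ m) * ENNReal.ofReal (π / 2) * B
      = ENNReal.ofReal (√(1 - c ^ 2) ^ m / (m + 1)) * B := by
        rw [← ENNReal.ofReal_mul (by positivity)]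
        congr 2
        field_simp
    _ ≤ volume (sphericalSector u c) := by
        have := le_prod_sector (volume : Measure (EuclideanSpace ℝ (Fin m))) hc0 hc1
        rw [hF] at this
        rw [hsector]
        exact this
    _ = μ {b | c ≤ ⟪a, b⟫} * volume (closedBall (0 : E) 1) :=
        (measure_inner_ge_mul_volume_closedBall μ hμ hsymm ha hu c).symm
    _ ≤ μ {b | c ≤ ⟪a, b⟫} * (ENNReal.ofReal (π / 2) * B) := by
        gcongr
        rw [hball]
        exact prod_unitBall_le volume (hF.symm ▸ hm)
    _ = _ := by ring

theorem le_measure_norm_sub_le {m : ℕ} (hm : 1 ≤ m) (hE : finrank ℝ E = m + 1) (μ : Measure E)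
    [IsProbabilityMeasure μ] (hμ : ∀ᵐ b ∂μ, ‖b‖ = 1) (hsymm : ∀ T : E ≃ₗᵢ[ℝ] E, μ.map T = μ)
    {a : E} (ha : ‖a‖ = 1) {δ : ℝ} (hδ0 : 0 < δ) :
    ENNReal.ofReal (1 / (π * m) * (δ * √(1 - δ ^ 2 / 4)) ^ m) ≤ μ {b | ‖a - b‖ ≤ δ} := by
  -- The sector bound needs `0 ≤ c`: for `δ > √2` the cap `1 - δ ^ 2 / 2 ≤ ⟪a, b⟫` is shrunk
  -- to a hemisphere.
  set c := max (1 - δ ^ 2 / 2) 0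
  have hc2 : c ^ 2 ≤ (1 - δ ^ 2 / 2) ^ 2 := by
    rcases le_total 0 (1 - δ ^ 2 / 2) with h | h <;> simp [c, h, sq_nonneg]
  have hcap : μ {b | c ≤ ⟪a, b⟫} ≤ μ {b | ‖a - b‖ ≤ δ} := by
    refine measure_mono_ae (hμ.mono fun b hb (hcb : c ≤ ⟪a, b⟫) ↦ ?_)
    have : ‖a - b‖ ^ 2 ≤ δ ^ 2 := by
      rw [norm_sub_sq_real, ha, hb]
      linarith [le_max_left (1 - δ ^ 2 / 2) 0]
    exact (sq_le_sq₀ (norm_nonneg _) hδ0.le).1 this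
  have hs : δ * √(1 - δ ^ 2 / 4) ≤ √(1 - c ^ 2) := by
    rw [← sqrt_sq hδ0.le, ← sqrt_mul (sq_nonneg δ), sqrt_sq hδ0.le]
    exact sqrt_le_sqrt (by nlinarith)
  refine le_trans ?_ ((le_measure_inner_ge hm hE μ hμ hsymm ha (le_max_right _ _)
    (max_lt (by nlinarith) one_pos)).trans hcap)
  have hm' : (1 : ℝ) ≤ m := by exact_mod_cast hm
  refine ENNReal.ofReal_le_ofReal (mul_le_mul ?_ (pow_le_pow_left₀ (by positivity) hs m)
    (by positivity) (by positivity))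
  rw [div_le_div_iff₀ (by positivity) (by positivity)]
  nlinarith [pi_pos]

end InnerProductSpace

end SphericalCap

open SphericalCap in
/-- If b is drawn uniformly from the unit sphere in ℝ^d (d ≥ 2) — i.e. from
a rotation-invariant probability measure supported on the unit sphere — and
a is a fixed unit vector, then for δ ∈ (0, 2],
P[‖a − b‖ ≤ δ] ≥ (1/(π(d−1))) (δ√(1 − δ²/4))^{d−1}. -/
theorem stmt_17 (d : ℕ) (hd : 2 ≤ d)
    (μ : Measure (EuclideanSpace ℝ (Fin d))) [IsProbabilityMeasure μ]
    (hsphere : μ {w | ‖w‖ = 1} = 1)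
    (hsymm : ∀ T : EuclideanSpace ℝ (Fin d) ≃ₗᵢ[ℝ] EuclideanSpace ℝ (Fin d),
      Measure.map T μ = μ)
    (a : EuclideanSpace ℝ (Fin d)) (ha : ‖a‖ = 1)
    (δ : ℝ) (hδ : δ ∈ Set.Ioc 0 2) :
    μ {b | ‖a - b‖ ≤ δ} ≥
      ENNReal.ofReal ((1 / (Real.pi * (d - 1))) *
        (δ * Real.sqrt (1 - δ ^ 2 / 4)) ^ (d - 1)) := by
  obtain ⟨m, rfl⟩ : ∃ m, d = m + 1 := ⟨d - 1, by omega⟩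
  have hμ : ∀ᵐ b ∂μ, ‖b‖ = 1 :=
    ae_iff.2 ((prob_compl_eq_zero_iff (measurableSet_eq_fun measurable_norm measurable_const)).2
      hsphere)
  simpa using le_measure_norm_sub_le (by omega) finrank_euclideanSpace_fin μ hμ hsymm ha hδ.1
end
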